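/- Let ψ_t be the flow of the vector field Y^φ defined by ι_{Y^φ}ω = λ - φ*λ, where φ is a symplectomorphism of (W, ω = dλ) with Y^φ compactly supported. Then for all t: ψ_t*λ - λ = t(λ - φ*λ) + d(∫₀ᵗ λ(Y^φ)∘ψ_s ds). Consequently (φ∘ψ₁)*λ - λ = (ψ₁*λ - λ) - (λ - φ*λ) is exact, i.e. φ∘ψ₁ is an exact symplectomorphism. -/

import Mathlib

/-- Pullback of a 1-form `lam` by a smooth map `φ`. -/
noncomputable def pullbackOneForm {E : Type*} [NormedAddCommGroup E] [NormedSpace ℝ E]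
    (φ : E → E) (lam : E → (E →L[ℝ] ℝ)) : E → (E →L[ℝ] ℝ) :=
  fun x => (lam (φ x)).comp (fderiv ℝ φ x)

/-- Exterior derivative of a 1-form `η`. -/
noncomputable def extDerivOneForm {E : Type*} [NormedAddCommGroup E] [NormedSpace ℝ E]
    (η : E → (E →L[ℝ] ℝ)) : E → E → E → ℝ :=
  fun x u v => fderiv ℝ η x u v - fderiv ℝ η x v u

/-- Pullback of a 2-form `Ω` by a smooth map `φ`. -/
noncomputable def pullbackTwoForm {E : Type*} [NormedAddCommGroup E] [NormedSpace ℝ E]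
    (φ : E → E) (Ω : E → E → E → ℝ) : E → E → E → ℝ :=
  fun x u v => Ω (φ x) (fderiv ℝ φ x u) (fderiv ℝ φ x v)


section GirouxAux
variable {E : Type*} [NormedAddCommGroup E] [NormedSpace ℝ E]

set_option linter.unusedSectionVars false
set_option synthInstance.maxHeartbeats 1000000
set_option maxHeartbeats 1000000
open Metric in
lemma tube_bound {H : ℝ × E → ℝ} (hH : Continuous H) {K : Set ℝ} (hK : IsCompact K) (x : E) :
    ∃ ε > 0, ∃ M, ∀ s ∈ K, ∀ y ∈ ball x ε, H (s, y) ≤ M := by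
  obtain ⟨M, hM⟩ : ∃ M, ∀ s ∈ K, H (s, x) ≤ M := by
    rcases K.eq_empty_or_nonempty with h | h
    · exact ⟨0, by simp [h]⟩
    · obtain ⟨s₀, hs₀, hmax⟩ := hK.exists_isMaxOn h
        ((hH.comp (continuous_id.prodMk continuous_const)).continuousOn)
      exact ⟨H (s₀, x), fun s hs => hmax hs⟩
  have hopen : IsOpen {p : ℝ × E | H p < M + 1} := isOpen_lt hH continuous_const
  have hsub : K ×ˢ ({x} : Set E) ⊆ {p : ℝ × E | H p < M + 1} := by
    rintro ⟨s, y⟩ ⟨hs, hy⟩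
    simp only [Set.mem_singleton_iff] at hy
    subst hy
    exact lt_of_le_of_lt (hM s hs) (lt_add_one M)
  obtain ⟨u, v, hu, hv, hKu, hxv, huv⟩ :=
    generalized_tube_lemma hK isCompact_singleton hopen hsub
  obtain ⟨ε, hε, hball⟩ := Metric.isOpen_iff.1 hv x (hxv rfl)
  exact ⟨ε, hε, M + 1, fun s hs y hy =>
    le_of_lt (huv (Set.mk_mem_prod (hKu hs) (hball hy)))⟩

lemma pb_contDiff {lam : E → E →L[ℝ] ℝ} (hlam : ContDiff ℝ (⊤ : ℕ∞) lam)
    {φ : E → E} (hφ : ContDiff ℝ (⊤ : ℕ∞) φ) : ContDiff ℝ (⊤ : ℕ∞) (pullbackOneForm φ lam) :=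
  (hlam.comp hφ).clm_comp (hφ.fderiv_right (m := (⊤ : ℕ∞)) (by simp))

/-- derivative of the pullback 1-form -/
lemma pb_hasFDerivAt {lam : E → E →L[ℝ] ℝ} (hlam : ContDiff ℝ (⊤ : ℕ∞) lam)
    {φ : E → E} (hφ : ContDiff ℝ (⊤ : ℕ∞) φ) (x : E) (u v : E) :
    fderiv ℝ (pullbackOneForm φ lam) x u v
      = fderiv ℝ lam (φ x) (fderiv ℝ φ x u) (fderiv ℝ φ x v)
        + lam (φ x) (fderiv ℝ (fderiv ℝ φ) x u v) := by
  have hc : HasFDerivAt (fun y => lam (φ y))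
      ((fderiv ℝ lam (φ x)).comp (fderiv ℝ φ x)) x :=
    ((hlam.differentiable (by simp) (φ x)).hasFDerivAt).comp x
      ((hφ.differentiable (by simp) x).hasFDerivAt)
  have hd : HasFDerivAt (fun y => fderiv ℝ φ y) (fderiv ℝ (fderiv ℝ φ) x) x :=
    ((hφ.fderiv_right (m := (⊤ : ℕ∞)) (by simp)).differentiable (by simp) x).hasFDerivAt
  have h := hc.clm_comp hd
  have : fderiv ℝ (pullbackOneForm φ lam) x = _ := h.fderiv
  rw [show pullbackOneForm φ lam = fun y => (lam (φ y)).comp (fderiv ℝ φ y) from rfl] at *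
  rw [this]
  simp
  ring

lemma pb_extDeriv {lam : E → E →L[ℝ] ℝ} (hlam : ContDiff ℝ (⊤ : ℕ∞) lam)
    {φ : E → E} (hφ : ContDiff ℝ (⊤ : ℕ∞) φ) (x u v : E) :
    extDerivOneForm (pullbackOneForm φ lam) x u v
      = pullbackTwoForm φ (extDerivOneForm lam) x u v := by
  have hsymm : fderiv ℝ (fderiv ℝ φ) x u v = fderiv ℝ (fderiv ℝ φ) x v u :=
    second_derivative_symmetric
      (fun y => ((hφ.differentiable (by simp) y).hasFDerivAt))
      (((hφ.fderiv_right (m := (⊤ : ℕ∞)) (by simp)).differentiable (by simp) x).hasFDerivAt) u v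
  simp only [extDerivOneForm, pullbackTwoForm, pb_hasFDerivAt hlam hφ, hsymm]
  ring

section Flow
variable {ψ : ℝ → E → E} {Y : E → E}
  (hψsm : ContDiff ℝ (⊤ : ℕ∞) (fun p : ℝ × E => ψ p.1 p.2))
  (hflow : ∀ t x, HasDerivAt (fun s => ψ s x) (Y (ψ t x)) t)
  (hYsm : ContDiff ℝ (⊤ : ℕ∞) Y)

include hψsm in
lemma slice_hasFDerivAt (t : ℝ) (x : E) :
    HasFDerivAt (ψ t)
      ((fderiv ℝ (fun p : ℝ × E => ψ p.1 p.2) (t, x)).comp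
        ((0 : E →L[ℝ] ℝ).prod (ContinuousLinearMap.id ℝ E))) x := by
  have h1 : HasFDerivAt (fun y : E => ((t, y) : ℝ × E))
      ((0 : E →L[ℝ] ℝ).prod (ContinuousLinearMap.id ℝ E)) x :=
    (hasFDerivAt_const t x).prodMk (hasFDerivAt_id x)
  exact ((hψsm.differentiable (by simp) (t, x)).hasFDerivAt).comp x h1

include hψsm in
lemma slice_fderiv (t : ℝ) (x : E) (v : E) :
    fderiv ℝ (ψ t) x v = fderiv ℝ (fun p : ℝ × E => ψ p.1 p.2) (t, x) (0, v) := by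
  rw [(slice_hasFDerivAt hψsm t x).fderiv]; rfl

include hψsm hflow in
lemma time_fderiv (t : ℝ) (x : E) :
    fderiv ℝ (fun p : ℝ × E => ψ p.1 p.2) (t, x) (1, 0) = Y (ψ t x) := by
  have h1 : HasDerivAt (fun s : ℝ => ((s, x) : ℝ × E)) ((1 : ℝ), (0 : E)) t :=
    (hasDerivAt_id t).prodMk (hasDerivAt_const t x)
  have h2 : HasDerivAt (fun s => ψ s x)
      (fderiv ℝ (fun p : ℝ × E => ψ p.1 p.2) (t, x) (1, 0)) t :=
    by
      have h := ((hψsm.differentiable (by simp) (t, x)).hasFDerivAt).comp_hasDerivAt t h1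
      exact h
  exact h2.unique (hflow t x)

include hψsm hflow hYsm in
/-- Clairaut: the time derivative of the space derivative of the flow. -/
lemma flow_mixed (t : ℝ) (x : E) (v : E) :
    HasDerivAt (fun s => fderiv ℝ (ψ s) x v)
      (fderiv ℝ Y (ψ t x) (fderiv ℝ (ψ t) x v)) t := by
  set G : ℝ × E → E := fun p => ψ p.1 p.2 with hGdef
  set DG : ℝ × E → (ℝ × E →L[ℝ] E) := fderiv ℝ G with hDGdef
  have hDGsm : ContDiff ℝ (⊤ : ℕ∞) DG := hψsm.fderiv_right (m := (⊤ : ℕ∞)) (by simp)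
  have hD2G : ∀ p, HasFDerivAt DG (fderiv ℝ DG p) p :=
    fun p => (hDGsm.differentiable (by simp) p).hasFDerivAt
  -- step 4 : derivative of t ↦ DG (t,x) (0,v)
  have h1 : HasDerivAt (fun s : ℝ => ((s, x) : ℝ × E)) ((1 : ℝ), (0 : E)) t :=
    (hasDerivAt_id t).prodMk (hasDerivAt_const t x)
  have h2 : HasDerivAt (fun s => DG (s, x)) (fderiv ℝ DG (t, x) (1, 0)) t :=
    (hD2G (t, x)).comp_hasDerivAt t h1
  have h3 : HasDerivAt (fun s => DG (s, x) (0, v))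
      (fderiv ℝ DG (t, x) (1, 0) (0, v)) t := by
    have := h2.clm_apply (hasDerivAt_const t ((0 : ℝ), v))
    simpa using this
  -- symmetry of second derivative
  have hsymm : fderiv ℝ DG (t, x) (1, 0) (0, v) = fderiv ℝ DG (t, x) (0, v) (1, 0) :=
    second_derivative_symmetric
      (fun p => (hψsm.differentiable (by simp) p).hasFDerivAt) (hD2G (t, x)) _ _
  -- the map p ↦ DG p (1,0) equals Y ∘ G
  have heq : (fun p : ℝ × E => DG p (1, 0)) = fun p => Y (G p) := by
    funext p
    exact time_fderiv hψsm hflow p.1 p.2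
  -- fderiv of p ↦ DG p (1,0) at (t,x) applied to (0,v)
  have h4 : HasFDerivAt (fun p : ℝ × E => DG p (1, 0))
      ((fderiv ℝ DG (t, x)).flip (1, 0)) (t, x) := by
    have := (hD2G (t, x)).clm_apply (hasFDerivAt_const ((1 : ℝ), (0 : E)) ((t, x) : ℝ × E))
    simpa using this
  have h5 : HasFDerivAt (fun p : ℝ × E => Y (G p))
      ((fderiv ℝ Y (G (t, x))).comp (DG (t, x))) (t, x) :=
    ((hYsm.differentiable (by simp) (G (t, x))).hasFDerivAt).comp _
      ((hψsm.differentiable (by simp) (t, x)).hasFDerivAt)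
  have h6 : (fderiv ℝ DG (t, x)).flip (1, 0)
      = (fderiv ℝ Y (G (t, x))).comp (DG (t, x)) := by
    rw [← h4.fderiv, ← h5.fderiv, heq]
  have h7 : fderiv ℝ DG (t, x) (0, v) (1, 0)
      = fderiv ℝ Y (ψ t x) (DG (t, x) (0, v)) := by
    have := congrArg (fun (L : ℝ × E →L[ℝ] E) => L (0, v)) h6
    simpa using this
  have hfin := h3
  rw [hsymm, h7] at hfin
  have hrw : (fun s => DG (s, x) (0, v)) = fun s => fderiv ℝ (ψ s) x v := by
    funext s; rw [slice_fderiv hψsm s x v]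
  rw [hrw] at hfin
  rwa [slice_fderiv hψsm t x v]

include hYsm in
lemma cartan_aux {η : E → E →L[ℝ] ℝ} (hη : ContDiff ℝ (⊤ : ℕ∞) η) (y w : E) :
    fderiv ℝ (fun z => η z (Y z)) y w
      = fderiv ℝ η y w (Y y) + η y (fderiv ℝ Y y w) := by
  have h := ((hη.differentiable (by simp) y).hasFDerivAt).clm_apply
    ((hYsm.differentiable (by simp) y).hasFDerivAt)
  rw [h.fderiv]
  simp
  ring

include hψsm hflow hYsm in
lemma transport {η : E → E →L[ℝ] ℝ} (hη : ContDiff ℝ (⊤ : ℕ∞) η) (t : ℝ) (x v : E) :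
    HasDerivAt (fun s => η (ψ s x) (fderiv ℝ (ψ s) x v))
      (extDerivOneForm η (ψ t x) (Y (ψ t x)) (fderiv ℝ (ψ t) x v)
        + fderiv ℝ (fun z => η z (Y z)) (ψ t x) (fderiv ℝ (ψ t) x v)) t := by
  have ha : HasDerivAt (fun s => η (ψ s x))
      (fderiv ℝ η (ψ t x) (Y (ψ t x))) t :=
    ((hη.differentiable (by simp) (ψ t x)).hasFDerivAt).comp_hasDerivAt t (hflow t x)
  have h := ha.clm_apply (flow_mixed hψsm hflow hYsm t x v)
  refine h.congr_deriv ?_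
  rw [cartan_aux hYsm hη]
  simp only [extDerivOneForm]
  ring

variable {lam : E → E →L[ℝ] ℝ} {φ : E → E}

include hψsm hflow hYsm in
lemma beta_const (hlam : ContDiff ℝ (⊤ : ℕ∞) lam) (hφ : ContDiff ℝ (⊤ : ℕ∞) φ)
    (hφsymp : ∀ x u v, pullbackTwoForm φ (extDerivOneForm lam) x u v
      = extDerivOneForm lam x u v)
    (hY : ∀ x v, extDerivOneForm lam x (Y x) v = lam x v - pullbackOneForm φ lam x v)
    (hψ0 : ∀ x, ψ 0 x = x) (t : ℝ) (x v : E) :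
    lam (ψ t x) (fderiv ℝ (ψ t) x v) - pullbackOneForm φ lam (ψ t x) (fderiv ℝ (ψ t) x v)
      = lam x v - pullbackOneForm φ lam x v := by
  set β : E → E →L[ℝ] ℝ := fun y => lam y - pullbackOneForm φ lam y with hβdef
  have hβ : ContDiff ℝ (⊤ : ℕ∞) β := hlam.sub (pb_contDiff hlam hφ)
  -- β(Y) vanishes identically
  have hβY : ∀ z, β z (Y z) = 0 := by
    intro z
    have h1 : (β z) (Y z) = extDerivOneForm lam z (Y z) (Y z) := by
      simp only [hβdef, ContinuousLinearMap.sub_apply]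
      exact (hY z (Y z)).symm
    rw [h1]; simp [extDerivOneForm]
  -- the fderiv of z ↦ β z (Y z) is zero
  have hβY0 : ∀ y w, fderiv ℝ (fun z => β z (Y z)) y w = 0 := by
    intro y w
    have : (fun z => β z (Y z)) = fun _ => (0 : ℝ) := funext hβY
    rw [this, fderiv_fun_const]; simp
  -- extDeriv β vanishes against Y
  have hdβ : ∀ y w, extDerivOneForm β y (Y y) w = 0 := by
    intro y w
    have hsub : ∀ u w', extDerivOneForm β y u w'
        = extDerivOneForm lam y u w' - extDerivOneForm (pullbackOneForm φ lam) y u w' := by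
      intro u w'
      have hd : fderiv ℝ β y
          = fderiv ℝ lam y - fderiv ℝ (pullbackOneForm φ lam) y :=
        fderiv_sub (hlam.differentiable (by simp) y)
          ((pb_contDiff hlam hφ).differentiable (by simp) y)
      simp only [extDerivOneForm, hd, ContinuousLinearMap.sub_apply]
      ring
    rw [hsub, pb_extDeriv hlam hφ, hφsymp, hY]
    ring
  -- the transported quantity is constant
  have hconst : ∀ s, HasDerivAt (fun r => β (ψ r x) (fderiv ℝ (ψ r) x v)) 0 s := by
    intro s
    have h := transport hψsm hflow hYsm hβ s x v
    rwa [hdβ, hβY0, add_zero] at h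
  have hdiff : Differentiable ℝ (fun r => β (ψ r x) (fderiv ℝ (ψ r) x v)) :=
    fun s => (hconst s).differentiableAt
  have hval := is_const_of_deriv_eq_zero hdiff (fun s => (hconst s).deriv) t 0
  have h0 : fderiv ℝ (ψ 0) x = ContinuousLinearMap.id ℝ E := by
    have : ψ 0 = fun y => y := funext hψ0
    rw [this]; exact fderiv_id
  have := hval
  rw [hψ0 x, h0] at this
  simpa [hβdef] using this

open Metric intervalIntegral in
include hψsm hflow hYsm in
lemma part1 (hlam : ContDiff ℝ (⊤ : ℕ∞) lam) (hφ : ContDiff ℝ (⊤ : ℕ∞) φ)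
    (hφsymp : ∀ x u v, pullbackTwoForm φ (extDerivOneForm lam) x u v
      = extDerivOneForm lam x u v)
    (hY : ∀ x v, extDerivOneForm lam x (Y x) v = lam x v - pullbackOneForm φ lam x v)
    (hψ0 : ∀ x, ψ 0 x = x) (t : ℝ) (x v : E) :
    pullbackOneForm (ψ t) lam x v - lam x v
      = t * (lam x v - pullbackOneForm φ lam x v)
        + fderiv ℝ (fun y => ∫ s in (0:ℝ)..t, lam (ψ s y) (Y (ψ s y))) x v := by
  classical
  set g : E → ℝ := fun z => lam z (Y z) with hgdef
  have hg : ContDiff ℝ (⊤ : ℕ∞) g := hlam.clm_apply hYsm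
  have hψslice : ∀ s : ℝ, ContDiff ℝ (⊤ : ℕ∞) (ψ s) := fun s =>
    hψsm.comp (contDiff_const.prodMk contDiff_id)
  -- the composed functions y ↦ g (ψ s y)
  have hgψ : ∀ s : ℝ, ContDiff ℝ (⊤ : ℕ∞) (fun y => g (ψ s y)) := fun s =>
    hg.comp (hψslice s)
  -- joint smoothness of (p, z) ↦ g (ψ p.1 z) with p : ℝ × E
  have hjoint : ContDiff ℝ (⊤ : ℕ∞) (Function.uncurry fun (p : ℝ × E) (z : E) => g (ψ p.1 z)) := by
    have : (Function.uncurry fun (p : ℝ × E) (z : E) => g (ψ p.1 z))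
        = fun q : (ℝ × E) × E => g (ψ q.1.1 q.2) := rfl
    rw [this]
    exact hg.comp (hψsm.comp ((contDiff_fst.comp contDiff_fst).prodMk contDiff_snd))
  -- the (joint) space-derivative field
  set F' : E → ℝ → (E →L[ℝ] ℝ) := fun y s => fderiv ℝ (fun z => g (ψ s z)) y with hF'def
  have hF'cont : Continuous fun p : ℝ × E => F' p.2 p.1 := by
    have := (hjoint.fderiv (g := fun p : ℝ × E => p.2) contDiff_snd
      ((by simp) : ((⊤ : ℕ∞) : WithTop ℕ∞) + 1 ≤ ((⊤ : ℕ∞) : WithTop ℕ∞))).continuous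
    exact this
  have hF'x : Continuous fun s : ℝ => F' x s :=
    hF'cont.comp (continuous_id.prodMk continuous_const)
  -- derivative of the transported form
  set C : ℝ := lam x v - pullbackOneForm φ lam x v with hCdef
  set Fl : ℝ → ℝ := fun s => lam (ψ s x) (fderiv ℝ (ψ s) x v) with hFldef
  have hFl' : ∀ s : ℝ, HasDerivAt Fl (C + F' x s v) s := by
    intro s
    have h := transport hψsm hflow hYsm hlam s x v
    have e1 : extDerivOneForm lam (ψ s x) (Y (ψ s x)) (fderiv ℝ (ψ s) x v) = C := by
      rw [hY]
      exact beta_const hψsm hflow hYsm hlam hφ hφsymp hY hψ0 s x v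
    have e2 : fderiv ℝ (fun z => g z) (ψ s x) (fderiv ℝ (ψ s) x v) = F' x s v := by
      have hc : HasFDerivAt (fun y => g (ψ s y))
          ((fderiv ℝ g (ψ s x)).comp (fderiv ℝ (ψ s) x)) x :=
        ((hg.differentiable (by simp) (ψ s x)).hasFDerivAt).comp x
          (((hψslice s).differentiable (by simp) x).hasFDerivAt)
      have heq : F' x s = (fderiv ℝ g (ψ s x)).comp (fderiv ℝ (ψ s) x) := hc.fderiv
      rw [heq]
      rfl
    rw [e1, e2] at h
    exact h
  -- FTC
  have hint : IntervalIntegrable (fun s => C + F' x s v) MeasureTheory.volume 0 t := by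
    apply Continuous.intervalIntegrable
    exact continuous_const.add ((ContinuousLinearMap.apply ℝ ℝ v).continuous.comp hF'x)
  have hFTC : ∫ s in (0:ℝ)..t, (C + F' x s v) = Fl t - Fl 0 :=
    integral_eq_sub_of_hasDerivAt (fun s _ => hFl' s) hint
  have hFl0 : Fl 0 = lam x v := by
    have h0 : fderiv ℝ (ψ 0) x = ContinuousLinearMap.id ℝ E := by
      have : ψ 0 = fun y => y := funext hψ0
      rw [this]; exact fderiv_id
    simp [hFldef, hψ0 x, h0]
  -- differentiation under the integral sign
  obtain ⟨ε, hε, M, hM⟩ := tube_bound (H := fun p : ℝ × E => ‖F' p.2 p.1‖)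
    hF'cont.norm (K := Set.uIcc (0:ℝ) t) isCompact_uIcc x
  have hparam : HasFDerivAt (fun y => ∫ s in (0:ℝ)..t, g (ψ s y))
      (∫ s in (0:ℝ)..t, F' x s) x := by
    apply intervalIntegral.hasFDerivAt_integral_of_dominated_of_fderiv_le (F := fun y s => g (ψ s y))
      (F' := F') (bound := fun _ => M) (Metric.ball_mem_nhds x hε)
    · filter_upwards with y
      exact ((hg.continuous.comp
        ((hψsm.continuous.comp (continuous_id.prodMk continuous_const)))).aestronglyMeasurable)
    · exact (Continuous.intervalIntegrable (hg.continuous.comp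
        (hψsm.continuous.comp (continuous_id.prodMk continuous_const))) 0 t)
    · exact hF'x.aestronglyMeasurable
    · filter_upwards with s hs y hy
      exact hM s (Set.uIoc_subset_uIcc hs) y hy
    · exact intervalIntegrable_const
    · filter_upwards with s hs y hy
      exact ((hgψ s).differentiable (by simp) y).hasFDerivAt
  have hF'int : IntervalIntegrable (fun s => F' x s) MeasureTheory.volume 0 t :=
    hF'x.intervalIntegrable 0 t
  have happly : fderiv ℝ (fun y => ∫ s in (0:ℝ)..t, g (ψ s y)) x v
      = ∫ s in (0:ℝ)..t, F' x s v := by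
    rw [hparam.fderiv]
    exact ContinuousLinearMap.intervalIntegral_apply hF'int v
  -- assemble
  have hsplit : ∫ s in (0:ℝ)..t, (C + F' x s v)
      = t * C + ∫ s in (0:ℝ)..t, F' x s v := by
    have hv : IntervalIntegrable (fun s => (F' x s) v) MeasureTheory.volume 0 t :=
      Continuous.intervalIntegrable
        ((ContinuousLinearMap.apply ℝ ℝ v).continuous.comp hF'x) 0 t
    rw [intervalIntegral.integral_add intervalIntegrable_const hv,
      intervalIntegral.integral_const, smul_eq_mul]
    ring_nf
  have hpb : pullbackOneForm (ψ t) lam x v = Fl t := rfl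
  rw [hpb, ← hFl0, ← hFTC, hsplit, happly]

include hψsm hflow hYsm in
lemma part2 (hlam : ContDiff ℝ (⊤ : ℕ∞) lam) (hφ : ContDiff ℝ (⊤ : ℕ∞) φ)
    (hφsymp : ∀ x u v, pullbackTwoForm φ (extDerivOneForm lam) x u v
      = extDerivOneForm lam x u v)
    (hY : ∀ x v, extDerivOneForm lam x (Y x) v = lam x v - pullbackOneForm φ lam x v)
    (hψ0 : ∀ x, ψ 0 x = x) (x v : E) :
    pullbackOneForm (fun y => φ (ψ 1 y)) lam x v - lam x v
      = fderiv ℝ (fun y => ∫ s in (0:ℝ)..1, lam (ψ s y) (Y (ψ s y))) x v := by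
  have hψslice : ContDiff ℝ (⊤ : ℕ∞) (ψ 1) := hψsm.comp (contDiff_const.prodMk contDiff_id)
  have hchain : fderiv ℝ (fun y => φ (ψ 1 y)) x
      = (fderiv ℝ φ (ψ 1 x)).comp (fderiv ℝ (ψ 1) x) :=
    (((hφ.differentiable (by simp) (ψ 1 x)).hasFDerivAt).comp x
      ((hψslice.differentiable (by simp) x).hasFDerivAt)).fderiv
  have hcomp : pullbackOneForm (fun y => φ (ψ 1 y)) lam x v
      = pullbackOneForm φ lam (ψ 1 x) (fderiv ℝ (ψ 1) x v) := by
    show lam (φ (ψ 1 x)) (fderiv ℝ (fun y => φ (ψ 1 y)) x v) = _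
    rw [hchain]
    rfl
  have hβ := beta_const hψsm hflow hYsm hlam hφ hφsymp hY hψ0 1 x v
  have h1 := part1 hψsm hflow hYsm hlam hφ hφsymp hY hψ0 1 x v
  have hpb1 : pullbackOneForm (ψ 1) lam x v = lam (ψ 1 x) (fderiv ℝ (ψ 1) x v) := rfl
  rw [hpb1] at h1
  rw [hcomp]
  have : pullbackOneForm φ lam (ψ 1 x) (fderiv ℝ (ψ 1) x v)
      = lam (ψ 1 x) (fderiv ℝ (ψ 1) x v) - (lam x v - pullbackOneForm φ lam x v) := by
    linarith [hβ]
  rw [this]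
  linarith [h1]

end Flow
end GirouxAux

/-- Let `ψ_t` be the flow of the (compactly supported) vector field `Y^φ` defined
by `ι_{Y^φ}ω = λ - φ*λ`, where `φ` is a symplectomorphism of `(W, ω = dλ)`.
Then `ψ_t*λ - λ = t(λ - φ*λ) + d(∫₀ᵗ λ(Y^φ)∘ψ_s ds)`; consequently
`(φ∘ψ₁)*λ - λ` is exact, i.e. `φ∘ψ₁` is an exact symplectomorphism. -/
theorem giroux_flow_exactness
    {E : Type*} [NormedAddCommGroup E] [NormedSpace ℝ E]
    (lam : E → (E →L[ℝ] ℝ)) (hlam : ContDiff ℝ (⊤ : ℕ∞) lam)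
    (φ : E → E) (hφ : ContDiff ℝ (⊤ : ℕ∞) φ)
    (hφsymp : ∀ x u v, pullbackTwoForm φ (extDerivOneForm lam) x u v
      = extDerivOneForm lam x u v)
    (Y : E → E) (hYsm : ContDiff ℝ (⊤ : ℕ∞) Y) (hYsupp : HasCompactSupport Y)
    (hY : ∀ x v, extDerivOneForm lam x (Y x) v = lam x v - pullbackOneForm φ lam x v)
    (ψ : ℝ → E → E)
    (hψsm : ContDiff ℝ (⊤ : ℕ∞) (fun p : ℝ × E => ψ p.1 p.2))
    (hψ0 : ∀ x, ψ 0 x = x)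
    (hflow : ∀ t x, HasDerivAt (fun s => ψ s x) (Y (ψ t x)) t) :
    (∀ t x (v : E), pullbackOneForm (ψ t) lam x v - lam x v
        = t * (lam x v - pullbackOneForm φ lam x v)
          + fderiv ℝ (fun y => ∫ s in (0:ℝ)..t, lam (ψ s y) (Y (ψ s y))) x v) ∧
    ∃ Fc : E → ℝ, ∀ x (v : E),
      pullbackOneForm (fun y => φ (ψ 1 y)) lam x v - lam x v = fderiv ℝ Fc x v := by
  refine ⟨fun t x v => part1 hψsm hflow hYsm hlam hφ hφsymp hY hψ0 t x v,
    ⟨fun y => ∫ s in (0:ℝ)..1, lam (ψ s y) (Y (ψ s y)),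
      fun x v => part2 hψsm hflow hYsm hlam hφ hφsymp hY hψ0 x v⟩⟩
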